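/- arXiv:1706.03401 — 4 statements merged into one kernel-verified Lean document; each statement's English description precedes it below -/
import Mathlib

section
/- Let D be a finite distributive lattice and let Q be a candidate subset of D (i.e., J⁺(D) ⊆ Q ⊆ D). If Q ⊆ D is principal congruence representable, then Q ⊆ D is chain-representable. -/
/-- A congruence of a lattice: an equivalence relation compatible with join and meet. -/
structure LatCon (L : Type*) [Lattice L] where
  r : L → L → Prop
  refl' : ∀ x, r x x
  symm' : ∀ {x y}, r x y → r y x
  trans' : ∀ {x y z}, r x y → r y z → r x z
  supCompat' : ∀ {a b c d}, r a b → r c d → r (a ⊔ c) (b ⊔ d)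
  infCompat' : ∀ {a b c d}, r a b → r c d → r (a ⊓ c) (b ⊓ d)

namespace LatCon

variable {L : Type*} [Lattice L]

theorem ext' {θ ψ : LatCon L} (h : θ.r = ψ.r) : θ = ψ := by
  cases θ; cases ψ; cases h; rfl

/-- Congruences ordered by inclusion. -/
instance : PartialOrder (LatCon L) where
  le θ ψ := ∀ ⦃x y⦄, θ.r x y → ψ.r x y
  le_refl _ _ _ h := h
  le_trans _ _ _ h h' _ _ hxy := h' (h hxy)
  le_antisymm θ ψ h h' :=
    ext' (by funext x y; exact propext ⟨fun hh => h hh, fun hh => h' hh⟩)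

end LatCon

/-- `latConGen x y`: the smallest congruence collapsing `x` and `y`. -/
def latConGen {L : Type*} [Lattice L] (x y : L) : LatCon L where
  r a b := ∀ θ : LatCon L, θ.r x y → θ.r a b
  refl' a _ _ := LatCon.refl' _ a
  symm' h θ hθ := θ.symm' (h θ hθ)
  trans' h h' θ hθ := θ.trans' (h θ hθ) (h' θ hθ)
  supCompat' h h' θ hθ := θ.supCompat' (h θ hθ) (h' θ hθ)
  infCompat' h h' θ hθ := θ.infCompat' (h θ hθ) (h' θ hθ)

/-- The set of principal congruences of a lattice. -/
def Princ (L : Type*) [Lattice L] : Set (LatCon L) :=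
  {θ | ∃ x y : L, x ≤ y ∧ θ = latConGen x y}

/-- The prime intervals (covering pairs) of an ordered set. -/
def PrimeInt (L : Type*) [Preorder L] : Type _ := {p : L × L // p.1 ⋖ p.2}

/-- The congruence generated by a prime interval. -/
def primeCon {L : Type*} [Lattice L] (p : PrimeInt L) : LatCon L :=
  latConGen p.val.1 p.val.2

/-- The set of nonzero join-irreducible elements of `D`. -/
def JSet (D : Type*) [SemilatticeSup D] : Set D := {d | SupIrred d}

/-- `Q` is a candidate subset of `D`: it contains `0`, `1`, and all join-irreducibles. -/
def IsCandidate (D : Type*) [Lattice D] [BoundedOrder D] (Q : Set D) : Prop :=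
  insert (⊥ : D) (insert (⊤ : D) (JSet D)) ⊆ Q

/-- `L` (a finite lattice) together with an isomorphism `φ : Con L → D` witnesses
principal congruence representability of `Q ⊆ D`. -/
def IsPCRWith (D : Type) [DistribLattice D] (Q : Set D)
    (L : Type) [iLat : Lattice L] [iFin : Fintype L] : Prop :=
  Nonempty L ∧ ∃ φ : LatCon L ≃o D, Q = φ '' Princ L

/-- `Q ⊆ D` is principal congruence representable. -/
def IsPCR (D : Type) [DistribLattice D] (Q : Set D) : Prop :=
  ∃ (L : Type) (iL : Lattice L) (iF : Fintype L),
    IsPCRWith D Q L (iLat := iL) (iFin := iF)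

/-- `D` is fully principal congruence representable. -/
def FullyPCR (D : Type) [DistribLattice D] [BoundedOrder D] : Prop :=
  ∀ Q : Set D, IsCandidate D Q → IsPCR D Q

/-- The element of `D` represented by the interval `[a,b]` of the chain `Fin (n+1)`,
whose `i`-th edge is labeled by `lab i`. -/
def erep {D : Type*} [SemilatticeSup D] [OrderBot D] {n : ℕ}
    (lab : Fin n → D) (a b : Fin (n + 1)) : D :=
  Finset.univ.sup fun i : Fin n =>
    if a ≤ i.castSucc ∧ i.succ ≤ b then lab i else ⊥

/-- The subset of `D` represented by the labeled chain `Fin (n+1)`. -/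
def srep {D : Type*} [SemilatticeSup D] [OrderBot D] {n : ℕ}
    (lab : Fin n → D) : Set D :=
  {x | ∃ a b : Fin (n + 1), a ≤ b ∧ x = erep lab a b}

/-- `lab` makes the chain `Fin (n+1)` a `J(D)`-labeled chain: the labels are
join-irreducible and every join-irreducible element occurs as a label. -/
def IsJLabeling {D : Type*} [SemilatticeSup D] {n : ℕ} (lab : Fin n → D) : Prop :=
  (∀ i, SupIrred (lab i)) ∧ (∀ d : D, SupIrred d → ∃ i, lab i = d)

/-- `Q ⊆ D` is chain-representable. -/
def IsChainRep (D : Type) [DistribLattice D] [BoundedOrder D] (Q : Set D) : Prop :=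
  ∃ (n : ℕ) (lab : Fin n → D), IsJLabeling lab ∧ Q = srep lab

/-- `D` is fully chain-representable. -/
def FullyChainRep (D : Type) [DistribLattice D] [BoundedOrder D] : Prop :=
  ∀ Q : Set D, IsCandidate D Q → IsChainRep D Q

/-- `D` is planar: `J(D)` is the union of two chains. -/
def IsPlanar (D : Type) [DistribLattice D] : Prop :=
  ∃ C₁ C₂ : Set D, IsChain (· ≤ ·) C₁ ∧ IsChain (· ≤ ·) C₂ ∧ JSet D = C₁ ∪ C₂

/-- `D` has at most one join-reducible coatom. -/
def AtMostOneJoinReducibleCoatom (D : Type) [DistribLattice D] [BoundedOrder D] : Prop :=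
  ∀ a b : D, IsCoatom a → IsCoatom b → ¬ SupIrred a → ¬ SupIrred b → a = b

/-- The automorphism group of the lattice `L` is isomorphic to the group `G`. -/
def AutIsoGroup (L : Type) [iLat : Lattice L] (G : Type) [iGrp : Group G] : Prop :=
  Nonempty (G ≃* (L ≃o L))

/-! A finite lattice `L` admits a walk along covering pairs, going up and down, that traverses
every interval `[u, v]` upwards along a stretch of consecutive steps. Label each step by the
congruence its covering pair generates; such congruences are join-irreducible in `Con L`.
Since congruence classes are convex sublattices, the join of the labels along a stretch of the
walk is `con(x, y)` for the smallest `x` and the largest `y` met on it, so every interval of the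
labelled chain represents a principal congruence, and the upward stretch through `[u, v]`
represents `con(u, v)`. -/

open Relation

theorem Relation.ReflTransGen.exists_rel_of_not {α : Type*} {r : α → α → Prop} {p : α → Prop}
    {a b : α} (h : ReflTransGen r a b) (ha : p a) (hb : ¬ p b) :
    ∃ c d, r c d ∧ p c ∧ ¬ p d := by
  induction h with
  | refl => exact absurd ha hb
  | @tail c d _ hcd ih =>
    by_cases hc : p c
    · exact ⟨c, d, hcd, hc, hb⟩
    · exact ih hc

theorem SupIrred.map_orderIso {α β : Type*} [SemilatticeSup α] [SemilatticeSup β] {a : α}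
    (ha : SupIrred a) (e : α ≃o β) : SupIrred (e a) := by
  refine ⟨fun hmin => ha.1 fun b hb => e.le_iff_le.1 (hmin (e.monotone hb)), fun b c hbc => ?_⟩
  have hsymm : e.symm b ⊔ e.symm c = a := by rw [← map_sup, hbc, e.symm_apply_apply]
  exact (ha.2 hsymm).imp e.symm_apply_eq.1 e.symm_apply_eq.1

theorem covBy_inf_sup_of_symmGen {α : Type*} [Lattice α] {x y : α}
    (h : SymmGen (· ⋖ ·) x y) : x ⊓ y ⋖ x ⊔ y := by
  rcases h with h | h
  · rwa [inf_eq_left.2 h.le, sup_eq_right.2 h.le]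
  · rwa [inf_eq_right.2 h.le, sup_eq_left.2 h.le]

theorem latConGen_rel {L : Type*} [Lattice L] (x y : L) : (latConGen x y).r x y :=
  fun _ h => h

theorem latConGen_le_iff {L : Type*} [Lattice L] {x y : L} {θ : LatCon L} :
    latConGen x y ≤ θ ↔ θ.r x y :=
  ⟨fun h => h (latConGen_rel x y), fun h _ _ hab => hab θ h⟩

namespace LatCon

variable {L : Type*} [Lattice L]

theorem r_of_le_of_le (θ : LatCon L) {x y x' y' : L} (h : θ.r x' y')
    (hx' : x' ≤ x) (hxy : x ≤ y) (hy' : y ≤ y') : θ.r x y := by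
  have hx : θ.r (x' ⊔ x) (y' ⊔ x) := θ.supCompat' h (θ.refl' x)
  rw [sup_eq_right.2 hx', sup_eq_left.2 (hxy.trans hy')] at hx
  have hy : θ.r (x ⊓ y) (y' ⊓ y) := θ.infCompat' hx (θ.refl' y)
  rwa [inf_eq_left.2 hxy, inf_eq_right.2 hy'] at hy

theorem r_of_r_inf_sup (θ : LatCon L) {x y : L} (h : θ.r (x ⊓ y) (x ⊔ y)) : θ.r x y :=
  θ.trans' (θ.symm' (θ.r_of_le_of_le h le_rfl inf_le_left le_sup_left))
    (θ.r_of_le_of_le h le_rfl inf_le_right le_sup_right)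

theorem r_inf'_sup'_of_forall_r (θ : LatCon L) {ι : Type*} {s : Finset ι} (hs : s.Nonempty)
    {f : ι → L} {c : L} (h : ∀ i ∈ s, θ.r (f i) c) : θ.r (s.inf' hs f) (s.sup' hs f) := by
  have hinf : θ.r (s.inf' hs f) c := Finset.inf'_induction hs f (p := (θ.r · c))
    (fun x hx y hy => by simpa only [inf_idem] using θ.infCompat' hx hy) h
  have hsup : θ.r (s.sup' hs f) c := Finset.sup'_induction hs f (p := (θ.r · c))
    (fun x hx y hy => by simpa only [sup_idem] using θ.supCompat' hx hy) h
  exact θ.trans' hinf (θ.symm' hsup)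

theorem r_of_forall_r_succ (θ : LatCon L) {z : ℕ → L} {a b : ℕ}
    (h : ∀ i, a ≤ i → i < b → θ.r (z i) (z (i + 1))) {j : ℕ} (haj : a ≤ j) (hjb : j ≤ b) :
    θ.r (z a) (z j) := by
  induction j, haj using Nat.le_induction with
  | base => exact θ.refl' _
  | succ j haj ih => exact θ.trans' (ih (by omega)) (h j haj (by omega))

theorem r_Icc_inf'_sup'_of_forall_r_succ (θ : LatCon L) {z : ℕ → L} {a b : ℕ} (hab : a ≤ b)
    (h : ∀ i, a ≤ i → i < b → θ.r (z i) (z (i + 1))) :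
    θ.r ((Finset.Icc a b).inf' (Finset.nonempty_Icc.2 hab) z)
      ((Finset.Icc a b).sup' (Finset.nonempty_Icc.2 hab) z) :=
  θ.r_inf'_sup'_of_forall_r _ fun _ hj =>
    θ.symm' (θ.r_of_forall_r_succ h (Finset.mem_Icc.1 hj).1 (Finset.mem_Icc.1 hj).2)

instance : OrderBot (LatCon L) where
  bot :=
    { r := Eq
      refl' := Eq.refl
      symm' := Eq.symm
      trans' := Eq.trans
      supCompat' := fun h h' => h ▸ h' ▸ rfl
      infCompat' := fun h h' => h ▸ h' ▸ rfl }
  bot_le θ := by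
    rintro x _ rfl
    exact θ.refl' x

theorem reflTransGen_or_map {θ ψ : LatCon L} (f : L → L)
    (hf : ∀ χ : LatCon L, ∀ ⦃x y⦄, χ.r x y → χ.r (f x) (f y)) {x y : L}
    (h : ReflTransGen (fun x y => θ.r x y ∨ ψ.r x y) x y) :
    ReflTransGen (fun x y => θ.r x y ∨ ψ.r x y) (f x) (f y) :=
  h.lift f fun _ _ hs => hs.imp (hf θ ·) (hf ψ ·)

instance : SemilatticeSup (LatCon L) where
  __ := (inferInstance : PartialOrder (LatCon L))
  sup θ ψ :=
    { r := ReflTransGen fun x y => θ.r x y ∨ ψ.r x y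
      refl' _ := .refl
      symm' h := by
        have : Std.Symm fun x y => θ.r x y ∨ ψ.r x y := ⟨fun _ _ hs => hs.imp θ.symm' ψ.symm'⟩
        exact Std.Symm.symm _ _ h
      trans' h h' := h.trans h'
      supCompat' {_ b c _} h h' :=
        (reflTransGen_or_map (· ⊔ c) (fun χ _ _ hχ => χ.supCompat' hχ (χ.refl' c)) h).trans
          (reflTransGen_or_map (b ⊔ ·) (fun χ _ _ hχ => χ.supCompat' (χ.refl' b) hχ) h')
      infCompat' {_ b c _} h h' :=
        (reflTransGen_or_map (· ⊓ c) (fun χ _ _ hχ => χ.infCompat' hχ (χ.refl' c)) h).trans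
          (reflTransGen_or_map (b ⊓ ·) (fun χ _ _ hχ => χ.infCompat' (χ.refl' b) hχ) h') }
  le_sup_left _ _ _ _ h := .single (.inl h)
  le_sup_right _ _ _ _ h := .single (.inr h)
  sup_le θ ψ χ hθ hψ x y h := by
    induction h with
    | refl => exact χ.refl' x
    | tail _ hs ih => exact χ.trans' ih (hs.elim (hθ ·) (hψ ·))

theorem sup_r (θ ψ : LatCon L) : (θ ⊔ ψ).r = ReflTransGen fun x y => θ.r x y ∨ ψ.r x y := rfl

/-- A chain of steps from `a` to `b`, projected into `[a, b]` by `x ↦ (x ⊔ a) ⊓ b`, must jump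
from `a` to `b` somewhere, since `a ⋖ b`. -/
theorem r_or_r_of_covBy {θ ψ : LatCon L} {a b : L} (hab : a ⋖ b) (h : (θ ⊔ ψ).r a b) :
    θ.r a b ∨ ψ.r a b := by
  set f : L → L := fun x => (x ⊔ a) ⊓ b
  have hf : ∀ χ : LatCon L, ∀ ⦃x y⦄, χ.r x y → χ.r (f x) (f y) := fun χ _ _ hχ =>
    χ.infCompat' (χ.supCompat' hχ (χ.refl' a)) (χ.refl' b)
  have ha : f a = a := by simp [f, hab.le]
  have hb : f b ≠ a := by simp [f, hab.ne']
  obtain ⟨c, d, hcd, hc, hd⟩ := (sup_r θ ψ ▸ h).exists_rel_of_not (p := (f · = a)) ha hb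
  have hd' : f d = b :=
    (hab.eq_or_eq (le_inf le_sup_right hab.le) inf_le_right).resolve_left hd
  exact hcd.imp (fun hθ => hc ▸ hd' ▸ hf θ hθ) (fun hψ => hc ▸ hd' ▸ hf ψ hψ)

end LatCon

theorem supIrred_latConGen_of_covBy {L : Type*} [Lattice L] {a b : L} (hab : a ⋖ b) :
    SupIrred (latConGen a b) := by
  refine ⟨fun hmin => hab.ne ((hmin bot_le) (latConGen_rel a b)), fun θ ψ h => ?_⟩
  have hθ : θ ≤ latConGen a b := h ▸ le_sup_left
  have hψ : ψ ≤ latConGen a b := h ▸ le_sup_right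
  refine (LatCon.r_or_r_of_covBy hab (h ▸ latConGen_rel a b)).imp ?_ ?_
  · exact fun hr => le_antisymm hθ (latConGen_le_iff.2 hr)
  · exact fun hr => le_antisymm hψ (latConGen_le_iff.2 hr)

theorem latConGen_mono {L : Type*} [Lattice L] {x y x' y' : L}
    (hx' : x' ≤ x) (hxy : x ≤ y) (hy' : y ≤ y') : latConGen x y ≤ latConGen x' y' :=
  latConGen_le_iff.2 ((latConGen x' y').r_of_le_of_le (latConGen_rel x' y') hx' hxy hy')

section Walk

variable {α : Type*}

def glue (n : ℕ) (z₁ z₂ : ℕ → α) : ℕ → α := fun i => if i ≤ n then z₁ i else z₂ (i - n)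

variable {n₁ n₂ : ℕ} {z₁ z₂ : ℕ → α}

theorem glue_of_le {i : ℕ} (h : i ≤ n₁) : glue n₁ z₁ z₂ i = z₁ i := if_pos h

theorem glue_add (hz : z₁ n₁ = z₂ 0) (i : ℕ) : glue n₁ z₁ z₂ (n₁ + i) = z₂ i := by
  rcases i.eq_zero_or_pos with rfl | hi
  · rw [add_zero, glue_of_le le_rfl, hz]
  · rw [glue, if_neg (by omega), Nat.add_sub_cancel_left]

theorem glue_step {r : α → α → Prop} (hz : z₁ n₁ = z₂ 0)
    (h₁ : ∀ i < n₁, r (z₁ i) (z₁ (i + 1))) (h₂ : ∀ i < n₂, r (z₂ i) (z₂ (i + 1))) :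
    ∀ i < n₁ + n₂, r (glue n₁ z₁ z₂ i) (glue n₁ z₁ z₂ (i + 1)) := by
  intro i hi
  rcases Nat.lt_or_ge i n₁ with h | h
  · rw [glue_of_le h.le, glue_of_le h]
    exact h₁ i h
  · obtain ⟨j, rfl⟩ := Nat.exists_eq_add_of_le h
    rw [glue_add hz, add_assoc, glue_add hz]
    exact h₂ j (by omega)

variable [Preorder α]

def HasAscendingRun (n : ℕ) (z : ℕ → α) (u v : α) : Prop :=
  ∃ a b, a ≤ b ∧ b ≤ n ∧ z a = u ∧ z b = v ∧ ∀ i, a ≤ i → i < b → z i ≤ z (i + 1)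

theorem HasAscendingRun.glue_left {u v : α} (h : HasAscendingRun n₁ z₁ u v) :
    HasAscendingRun (n₁ + n₂) (glue n₁ z₁ z₂) u v := by
  obtain ⟨a, b, hab, hb, hu, hv, hmono⟩ := h
  refine ⟨a, b, hab, by omega, by rwa [glue_of_le (by omega)], by rwa [glue_of_le hb],
    fun i hi hib => ?_⟩
  rw [glue_of_le (by omega), glue_of_le (by omega)]
  exact hmono i hi hib

theorem HasAscendingRun.glue_right (hz : z₁ n₁ = z₂ 0) {u v : α}
    (h : HasAscendingRun n₂ z₂ u v) : HasAscendingRun (n₁ + n₂) (glue n₁ z₁ z₂) u v := by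
  obtain ⟨a, b, hab, hb, hu, hv, hmono⟩ := h
  refine ⟨n₁ + a, n₁ + b, by omega, by omega, by rwa [glue_add hz], by rwa [glue_add hz],
    fun i hi hib => ?_⟩
  obtain ⟨j, rfl⟩ := Nat.exists_eq_add_of_le (le_of_add_le_left hi)
  rw [glue_add hz, add_assoc, glue_add hz]
  exact hmono j (by omega) (by omega)

end Walk

section CovByWalk

variable {α : Type*} [PartialOrder α]

/-- `m = z 0 ⋖ ⋯ ⋖ u ⋖ ⋯ ⋖ v ⋗ ⋯ ⋗ z n = m` -/
theorem exists_covBy_mountain [Finite α] {m u v : α} (hmu : m ≤ u) (huv : u ≤ v) :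
    ∃ n z, z 0 = m ∧ z n = m ∧ (∀ i < n, SymmGen (· ⋖ ·) (z i) (z (i + 1))) ∧
      HasAscendingRun n z u v := by
  obtain ⟨zu, hzu₀, nu, hzu, hu⟩ := exists_covBy_seq_of_wellFoundedLT_wellFoundedGT_of_le hmu
  obtain ⟨zv, hzv₀, nv, hzv, hv⟩ := exists_covBy_seq_of_wellFoundedLT_wellFoundedGT_of_le huv
  obtain ⟨zd, hzd₀, nd, hzd, hd⟩ :=
    exists_covBy_seq_of_wellFoundedLT_wellFoundedGT_of_le (hmu.trans huv)
  have hup : zu nu = zv 0 := hzu.trans hzv₀.symm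
  let zdown : ℕ → α := fun i => zd (nd - i)
  have hdown : glue nu zu zv (nu + nv) = zdown 0 := by
    simp only [zdown, glue_add hup, hzv, Nat.sub_zero, hzd]
  refine ⟨nu + nv + nd, glue (nu + nv) (glue nu zu zv) zdown, ?_, ?_, ?_, ?_⟩
  · rw [glue_of_le (Nat.zero_le _), glue_of_le (Nat.zero_le _), hzu₀]
  · simp only [glue_add hdown, zdown, Nat.sub_self, hzd₀]
  · refine glue_step hdown
      (glue_step hup (fun i hi => .of_rel (hu i hi)) (fun i hi => .of_rel (hv i hi)))
      fun i hi => .of_rel_symm ?_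
    simp only [zdown, show nd - i = nd - (i + 1) + 1 by omega]
    exact hd _ (by omega)
  · exact HasAscendingRun.glue_left <| HasAscendingRun.glue_right hup
      ⟨0, nv, nv.zero_le, le_rfl, hzv₀, hzv, fun i _ hi => (hv i hi).le⟩

theorem exists_covBy_walk [OrderBot α] [Finite α] :
    ∃ n z, (∀ i < n, SymmGen (· ⋖ ·) (z i) (z (i + 1))) ∧
      ∀ u v : α, u ≤ v → HasAscendingRun n z u v := by
  classical
  have := Fintype.ofFinite α
  suffices h : ∀ s : Finset (α × α), (∀ p ∈ s, p.1 ≤ p.2) → ∃ n z, z 0 = ⊥ ∧ z n = ⊥ ∧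
      (∀ i < n, SymmGen (· ⋖ ·) (z i) (z (i + 1))) ∧ ∀ p ∈ s, HasAscendingRun n z p.1 p.2 by
    obtain ⟨n, z, -, -, hstep, hrun⟩ := h {p | p.1 ≤ p.2} (by simp)
    exact ⟨n, z, hstep, fun u v huv => hrun (u, v) (by simpa using huv)⟩
  intro s
  induction s using Finset.induction_on with
  | empty => exact fun _ => ⟨0, fun _ => ⊥, rfl, rfl, by simp, by simp⟩
  | insert p s _ ih =>
    intro hs
    obtain ⟨n₂, z₂, hz₂₀, hz₂, hstep₂, hrun₂⟩ := ih fun q hq => hs q (by simp [hq])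
    obtain ⟨n₁, z₁, hz₁₀, hz₁, hstep₁, hrun₁⟩ := exists_covBy_mountain bot_le (hs p (by simp))
    have hz : z₁ n₁ = z₂ 0 := hz₁.trans hz₂₀.symm
    refine ⟨n₁ + n₂, glue n₁ z₁ z₂, by rwa [glue_of_le (Nat.zero_le _)],
      by rwa [glue_add hz], glue_step hz hstep₁ hstep₂, ?_⟩
    simp only [Finset.mem_insert, forall_eq_or_imp]
    exact ⟨hrun₁.glue_left, fun q hq => (hrun₂ q hq).glue_right hz⟩

end CovByWalk

section Erep

variable {D : Type*} [SemilatticeSup D] [OrderBot D] {n : ℕ}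

theorem erep_le_iff {lab : Fin n → D} {a b : Fin (n + 1)} {x : D} :
    erep lab a b ≤ x ↔ ∀ i : Fin n, a ≤ i.castSucc → i.succ ≤ b → lab i ≤ x := by
  simp only [erep, Finset.sup_le_iff, Finset.mem_univ, true_implies]
  refine forall_congr' fun i => ?_
  split_ifs with h
  · exact ⟨fun hi _ _ => hi, fun hi => hi h.1 h.2⟩
  · exact ⟨fun _ h₁ h₂ => absurd ⟨h₁, h₂⟩ h, fun _ => bot_le⟩

theorem exists_eq_of_supIrred_erep {lab : Fin n → D} {a b : Fin (n + 1)}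
    (h : SupIrred (erep lab a b)) : ∃ i, lab i = erep lab a b := by
  obtain ⟨i, -, hi⟩ := h.finset_sup_eq rfl
  split_ifs at hi
  · exact ⟨i, hi⟩
  · exact absurd hi.symm h.ne_bot

end Erep

def walkLabel {L D : Type*} [Lattice L] [LE D] (φ : LatCon L ≃o D) (z : ℕ → L) (n : ℕ) :
    Fin n → D :=
  fun i => φ (latConGen (z i ⊓ z (i + 1)) (z i ⊔ z (i + 1)))

theorem supIrred_walkLabel {L D : Type*} [Lattice L] [SemilatticeSup D] (φ : LatCon L ≃o D)
    {z : ℕ → L} {n : ℕ} {i : Fin n} (h : SymmGen (· ⋖ ·) (z i) (z (i + 1))) :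
    SupIrred (walkLabel φ z n i) :=
  (supIrred_latConGen_of_covBy (covBy_inf_sup_of_symmGen h)).map_orderIso φ

section WalkLabel

variable {L D : Type*} [Lattice L] [SemilatticeSup D] [OrderBot D]

theorem erep_walkLabel (φ : LatCon L ≃o D) (z : ℕ → L) {n : ℕ} {a b : Fin (n + 1)}
    (hab : a ≤ b) :
    erep (walkLabel φ z n) a b =
      φ (latConGen ((Finset.Icc (a : ℕ) b).inf' (Finset.nonempty_Icc.2 hab) z)
        ((Finset.Icc (a : ℕ) b).sup' (Finset.nonempty_Icc.2 hab) z)) := by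
  refine le_antisymm (erep_le_iff.2 fun i hai hib => ?_) ?_
  · rw [Fin.le_def, Fin.val_castSucc] at hai
    rw [Fin.le_def, Fin.val_succ] at hib
    have hi : (i : ℕ) ∈ Finset.Icc (a : ℕ) b := Finset.mem_Icc.2 ⟨hai, by omega⟩
    have hi' : (i : ℕ) + 1 ∈ Finset.Icc (a : ℕ) b := Finset.mem_Icc.2 ⟨by omega, hib⟩
    exact φ.monotone (latConGen_mono (le_inf (Finset.inf'_le z hi) (Finset.inf'_le z hi'))
      (inf_le_left.trans le_sup_left) (sup_le (Finset.le_sup' z hi) (Finset.le_sup' z hi')))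
  · rw [← φ.le_symm_apply, latConGen_le_iff]
    refine (φ.symm _).r_Icc_inf'_sup'_of_forall_r_succ hab fun i hai hib => ?_
    have hin : i < n := by omega
    have hlabel := erep_le_iff.1 (le_refl (erep (walkLabel φ z n) a b)) ⟨i, hin⟩
      (by simpa [Fin.le_def] using hai) (by simpa [Fin.le_def] using hib)
    exact LatCon.r_of_r_inf_sup _ (latConGen_le_iff.1 (φ.le_symm_apply.2 hlabel))

theorem exists_erep_walkLabel_eq_of_hasAscendingRun (φ : LatCon L ≃o D) {z : ℕ → L} {n : ℕ}
    {u v : L} (h : HasAscendingRun n z u v) :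
    ∃ a b : Fin (n + 1), a ≤ b ∧ erep (walkLabel φ z n) a b = φ (latConGen u v) := by
  obtain ⟨a, b, hab, hbn, rfl, rfl, hstep⟩ := h
  have hmono : MonotoneOn z (Set.Icc a b) := monotoneOn_of_le_succ Set.ordConnected_Icc
    fun i _ hi hi' => by simpa using hstep i hi.1 (by simpa using hi'.2)
  refine ⟨⟨a, by omega⟩, ⟨b, by omega⟩, hab, ?_⟩
  rw [erep_walkLabel φ z (Fin.mk_le_mk.2 hab)]
  congr 2
  · refine le_antisymm (Finset.inf'_le z (Finset.left_mem_Icc.2 hab)) (Finset.le_inf' _ _ ?_)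
    exact fun j hj => hmono (Set.left_mem_Icc.2 hab) (by simpa using hj) (Finset.mem_Icc.1 hj).1
  · refine le_antisymm (Finset.sup'_le _ _ ?_) (Finset.le_sup' z (Finset.right_mem_Icc.2 hab))
    exact fun j hj => hmono (by simpa using hj) (Set.right_mem_Icc.2 hab) (Finset.mem_Icc.1 hj).2

theorem srep_walkLabel (φ : LatCon L ≃o D) {z : ℕ → L} {n : ℕ}
    (h : ∀ u v, u ≤ v → HasAscendingRun n z u v) : srep (walkLabel φ z n) = φ '' Princ L := by
  ext x
  constructor
  · rintro ⟨a, b, hab, rfl⟩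
    have ha : (a : ℕ) ∈ Finset.Icc (a : ℕ) b := Finset.left_mem_Icc.2 hab
    exact ⟨_, ⟨_, _, (Finset.inf'_le z ha).trans (Finset.le_sup' z ha), rfl⟩,
      (erep_walkLabel φ z hab).symm⟩
  · rintro ⟨_, ⟨u, v, huv, rfl⟩, rfl⟩
    obtain ⟨a, b, hab, he⟩ := exists_erep_walkLabel_eq_of_hasAscendingRun φ (h u v huv)
    exact ⟨a, b, hab, he.symm⟩

end WalkLabel

theorem isChainRep_of_isPCR_general
    (D : Type) [DistribLattice D] [BoundedOrder D]
    (Q : Set D) (hQ : IsCandidate D Q) (hrep : IsPCR D Q) :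
    IsChainRep D Q := by
  obtain ⟨L, _, _, hne, φ, rfl⟩ := hrep
  let := Fintype.toOrderBot L
  obtain ⟨n, z, hstep, hrun⟩ := exists_covBy_walk (α := L)
  have hsrep := srep_walkLabel φ hrun
  refine ⟨n, walkLabel φ z n, ⟨fun i => supIrred_walkLabel φ (hstep i i.isLt), fun d hd => ?_⟩,
    hsrep.symm⟩
  obtain ⟨a, b, -, rfl⟩ : d ∈ srep (walkLabel φ z n) :=
    hsrep ▸ hQ (Set.mem_insert_of_mem _ (Set.mem_insert_of_mem _ hd))
  exact exists_eq_of_supIrred_erep hd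

/-- If a candidate subset `Q` of a finite distributive lattice `D` is principal
congruence representable, then it is chain-representable. -/
theorem isChainRep_of_isPCR
    (D : Type) [DistribLattice D] [Fintype D] [BoundedOrder D]
    (Q : Set D) (hQ : IsCandidate D Q) (hrep : IsPCR D Q) :
    IsChainRep D Q :=
  isChainRep_of_isPCR_general D Q hQ hrep
end

section
/- Let L be a lattice of finite length, and let r₁ and r₂ be prime intervals in L. Then con(r₁) ≥ con(r₂) if and only if there exist n ≥ 0 and a sequence r₁ = p₀, p₁, …, pₙ = r₂ of prime intervals of L such that for each i ∈ {1, …, n}, p_{i−1} is prime-perspective down to pᵢ or prime-perspective up to pᵢ. -/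
/-- An ordered set has finite length if the sizes of its chains are bounded. -/
def FiniteLength (L : Type*) [Preorder L] : Prop :=
  ∃ N : ℕ, ∀ (m : ℕ) (f : Fin m → L), StrictMono f → m ≤ N

/-- `p` is prime-perspective down to `q`. -/
def PPDown {L : Type*} [Lattice L] (p q : PrimeInt L) : Prop :=
  p.val.2 = p.val.1 ⊔ q.val.2 ∧ p.val.1 ⊓ q.val.2 ≤ q.val.1

/-- `p` is prime-perspective up to `q`. -/
def PPUp {L : Type*} [Lattice L] (p q : PrimeInt L) : Prop :=
  p.val.1 = p.val.2 ⊓ q.val.1 ∧ q.val.2 ≤ p.val.2 ⊔ q.val.1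

namespace PPL

variable {L : Type*} [Lattice L]

/-- One prime-perspectivity step (down or up). -/
def Step (p q : PrimeInt L) : Prop := PPDown p q ∨ PPUp p q

/-- Reachability from `r` by a chain of prime-perspectivities. -/
def Reach (r q : PrimeInt L) : Prop :=
  ∃ (n : ℕ) (f : Fin (n + 1) → PrimeInt L),
    f 0 = r ∧ f (Fin.last n) = q ∧
    ∀ i : Fin n, Step (f i.castSucc) (f i.succ)

lemma reach_refl (r : PrimeInt L) : Reach r r :=
  ⟨0, fun _ => r, rfl, rfl, fun i => i.elim0⟩

lemma reach_step {r q q' : PrimeInt L} (h : Reach r q) (hst : Step q q') : Reach r q' := by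
  obtain ⟨n, f, h0, hl, hs⟩ := h
  refine ⟨n + 1, Fin.snoc f q', ?_, ?_, ?_⟩
  · have h00 : (0 : Fin (n + 2)) = Fin.castSucc (0 : Fin (n + 1)) := rfl
    rw [h00, Fin.snoc_castSucc]; exact h0
  · exact Fin.snoc_last _ _
  · intro i
    have h1 : (Fin.snoc f q' : Fin (n + 2) → PrimeInt L) i.castSucc = f i :=
      Fin.snoc_castSucc _ _ _
    rcases Nat.lt_or_ge (i : ℕ) n with hlt | hge
    · have h2 : i.succ = Fin.castSucc (⟨(i : ℕ) + 1, by omega⟩ : Fin (n + 1)) := by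
        apply Fin.ext; simp
      have h3 : (Fin.snoc f q' : Fin (n + 2) → PrimeInt L) i.succ
          = f ⟨(i : ℕ) + 1, by omega⟩ := by rw [h2, Fin.snoc_castSucc]
      rw [h1, h3]
      have := hs ⟨(i : ℕ), hlt⟩
      have e1 : (Fin.castSucc (⟨(i : ℕ), hlt⟩ : Fin n)) = i := by apply Fin.ext; simp
      have e2 : (Fin.succ (⟨(i : ℕ), hlt⟩ : Fin n)) = ⟨(i : ℕ) + 1, by omega⟩ := by
        apply Fin.ext; simp
      rwa [e1, e2] at this
    · have hi : i = Fin.last n := by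
        apply Fin.ext; have := i.isLt; simp; omega
      subst hi
      have h2 : (Fin.last n).succ = Fin.last (n + 1) := rfl
      rw [h1, hl, h2, Fin.snoc_last]
      exact hst

/-- Chains of covers, all of whose covering pairs are reachable from `r`. -/
inductive C (r : PrimeInt L) : L → L → Prop
  | refl (a : L) : C r a a
  | step {a c b : L} (h : a ⋖ c) (hr : Reach r (⟨(a, c), h⟩ : PrimeInt L))
      (hcb : C r c b) : C r a b

lemma C_le {r : PrimeInt L} {a b : L} (h : C r a b) : a ≤ b := by
  induction h with
  | refl a => exact le_rfl
  | step h hr hcb ih => exact h.le.trans ih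

lemma C_trans {r : PrimeInt L} {a b c : L} (h1 : C r a b) (h2 : C r b c) : C r a c := by
  induction h1 with
  | refl a => exact h2
  | step h hr hcb ih => exact C.step h hr (ih h2)

lemma reach_of_C {r : PrimeInt L} {a b : L} (hab : a ⋖ b) (h : C r a b) :
    Reach r (⟨(a, b), hab⟩ : PrimeInt L) := by
  cases h with
  | refl => exact absurd rfl hab.lt.ne
  | step hcov hr hcb =>
    rename_i mid
    have hc : mid = b := by
      rcases CovBy.eq_or_eq hab hcov.le (C_le hcb) with h | h
      · exact absurd h.symm hcov.lt.ne
      · exact h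
    subst hc
    exact hr

/-- DCC from finite length: every nonempty set has a minimal element. -/
lemma exists_min (hFL : FiniteLength L) (T : Set L) (hne : T.Nonempty) :
    ∃ m ∈ T, ∀ s ∈ T, ¬ s < m := by
  by_contra hcon
  push_neg at hcon
  obtain ⟨N, hN⟩ := hFL
  -- build a strictly decreasing sequence
  have hstep : ∀ x : {x // x ∈ T}, ∃ y : {y // y ∈ T}, (y : L) < x := by
    rintro ⟨x, hx⟩
    obtain ⟨y, hy, hlt⟩ := hcon x hx
    exact ⟨⟨y, hy⟩, hlt⟩
  choose g hg using hstep
  obtain ⟨x0, hx0⟩ := hne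
  have f : ℕ → {x // x ∈ T} := fun k =>
    Nat.rec (motive := fun _ => {x // x ∈ T}) ⟨x0, hx0⟩ (fun _ p => g p) k
  have hdec : StrictAnti (fun k =>
      ((Nat.rec (motive := fun _ => {x // x ∈ T}) ⟨x0, hx0⟩ (fun _ p => g p) k : {x // x ∈ T}) : L)) :=
    strictAnti_nat_of_succ_lt (fun k => hg _)
  set F0 : ℕ → {x // x ∈ T} :=
    fun k => Nat.rec (motive := fun _ => {x // x ∈ T}) ⟨x0, hx0⟩ (fun _ p => g p) k with hF0
  have hmono : StrictMono (fun i : Fin (N + 2) => (F0 (N + 1 - (i : ℕ)) : L)) := by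
    intro i j hij
    have hj : (j : ℕ) ≤ N + 1 := by omega
    have hij' : (i : ℕ) < (j : ℕ) := hij
    exact hdec (by omega : N + 1 - (j : ℕ) < N + 1 - (i : ℕ))
  have := hN (N + 2) _ hmono
  omega

/-- For `a < b` there is `c` with `a ⋖ c ≤ b`. -/
lemma exists_covby (hFL : FiniteLength L) {a b : L} (h : a < b) :
    ∃ c, a ⋖ c ∧ c ≤ b := by
  obtain ⟨m, hm, hmin⟩ := exists_min hFL {s | a < s ∧ s ≤ b} ⟨b, h, le_rfl⟩
  refine ⟨m, ⟨hm.1, fun z hz1 hz2 => hmin z ⟨hz1, hz2.le.trans hm.2⟩ hz2⟩, hm.2⟩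

/-- If every prime interval inside `[a, b]` is reachable, then `C r a b`. -/
lemma C_of_primes (hFL : FiniteLength L) {r : PrimeInt L} {a b : L} (hab : a ≤ b)
    (hS : ∀ (u v : L) (h : u ⋖ v), a ≤ u → v ≤ b → Reach r (⟨(u, v), h⟩ : PrimeInt L)) :
    C r a b := by
  obtain ⟨N, hN⟩ := hFL
  have aux : ∀ (k : ℕ) (a b : L), a ≤ b →
      (∀ (m : ℕ) (f : Fin m → L), StrictMono f → (∀ i, a ≤ f i ∧ f i ≤ b) → m ≤ k) →
      (∀ (u v : L) (h : u ⋖ v), a ≤ u → v ≤ b →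
        Reach r (⟨(u, v), h⟩ : PrimeInt L)) → C r a b := by
    intro k
    induction k with
    | zero =>
      intro a b hab hbound _
      exfalso
      have := hbound 1 (fun _ => a) (fun i j hij => absurd hij (by omega))
        (fun _ => ⟨le_rfl, hab⟩)
      omega
    | succ k ih =>
      intro a b hab hbound hprime
      rcases eq_or_lt_of_le hab with heq | hlt
      · subst heq; exact C.refl a
      obtain ⟨c, hac, hcb⟩ := exists_covby ⟨N, hN⟩ hlt
      have hcC : C r c b := by
        apply ih c b hcb
        · intro m f hf hmem
          have hb := hbound (m + 1) (Fin.cons a f) ?_ ?_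
          · omega
          · rw [Fin.strictMono_iff_lt_succ]
            rintro ⟨iv, hiv⟩
            cases iv with
            | zero =>
              have e0 : (Fin.castSucc (⟨0, hiv⟩ : Fin m)) = (0 : Fin (m+1)) := by
                apply Fin.ext; simp
              have e1 : (Fin.succ (⟨0, hiv⟩ : Fin m)) = Fin.succ (⟨0, hiv⟩ : Fin m) := rfl
              rw [e0, Fin.cons_zero, Fin.cons_succ]
              exact lt_of_lt_of_le hac.lt (hmem _).1
            | succ j =>
              have hj : j < m := by omega
              have e0 : (Fin.castSucc (⟨j + 1, hiv⟩ : Fin m)) = Fin.succ (⟨j, hj⟩ : Fin m) := by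
                apply Fin.ext; simp
              rw [e0, Fin.cons_succ, Fin.cons_succ]
              exact hf (show (⟨j, hj⟩ : Fin m) < ⟨j + 1, hiv⟩ by
                simp [Fin.lt_def])
          · intro i
            induction i using Fin.cases with
            | zero => rw [Fin.cons_zero]; exact ⟨le_rfl, hab⟩
            | succ j =>
              rw [Fin.cons_succ]
              exact ⟨hac.le.trans (hmem j).1, (hmem j).2⟩
        · intro u v h hu hv
          exact hprime u v h (hac.le.trans hu) hv
      exact C.step hac (hprime a c hac le_rfl hcb) hcC
  exact aux N a b hab (fun m f hf _ => hN m f hf) hS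

/-- one-step pp-up lemma -/
lemma ppup_of {x y u v : L} (hxy : x ⋖ y) (huv : u ⋖ v) (hxu : x ≤ u) (hv : v ≤ y ⊔ u) :
    PPUp (⟨(x, y), hxy⟩ : PrimeInt L) (⟨(u, v), huv⟩ : PrimeInt L) := by
  constructor
  · show x = y ⊓ u
    rcases CovBy.eq_or_eq hxy (le_inf hxy.le hxu) inf_le_left with h | h
    · exact h.symm
    · exfalso
      have hyu : y ≤ u := h ▸ inf_le_right
      exact absurd (hv.trans (sup_le hyu le_rfl)) (not_le_of_gt huv.lt)
  · exact hv

/-- one-step pp-down lemma -/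
lemma ppdown_of {x y u v : L} (hxy : x ⋖ y) (huv : u ⋖ v) (hv : v ≤ y) (hxv : x ⊓ v ≤ u) :
    PPDown (⟨(x, y), hxy⟩ : PrimeInt L) (⟨(u, v), huv⟩ : PrimeInt L) := by
  constructor
  · show y = x ⊔ v
    rcases CovBy.eq_or_eq hxy le_sup_left (sup_le hxy.le hv) with h | h
    · exfalso
      have hvx : v ≤ x := h ▸ le_sup_right
      exact absurd ((le_inf hvx le_rfl).trans hxv) (not_le_of_gt huv.lt)
    · exact h.symm
  · exact hxv

lemma C_join (hFL : FiniteLength L) {r : PrimeInt L} {a b : L} (h : C r a b) (t : L) :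
    C r (a ⊔ t) (b ⊔ t) := by
  induction h with
  | refl a => exact C.refl _
  | @step a c b hac hr hcb ih =>
    refine C_trans ?_ ih
    apply C_of_primes hFL (sup_le_sup_right hac.le t)
    intro u v huv hu hv
    have hau : a ≤ u := le_sup_left.trans hu
    have htu : t ≤ u := le_sup_right.trans hu
    have hv' : v ≤ c ⊔ u := hv.trans (sup_le_sup_left htu c)
    exact reach_step hr (Or.inr (ppup_of hac huv hau hv'))

lemma C_meet (hFL : FiniteLength L) {r : PrimeInt L} {a b : L} (h : C r a b) (t : L) :
    C r (a ⊓ t) (b ⊓ t) := by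
  induction h with
  | refl a => exact C.refl _
  | @step a c b hac hr hcb ih =>
    refine C_trans ?_ ih
    apply C_of_primes hFL (inf_le_inf_right t hac.le)
    intro u v huv hu hv
    have hvc : v ≤ c := hv.trans inf_le_left
    have hvt : v ≤ t := hv.trans inf_le_right
    have hav : a ⊓ v ≤ u := (le_inf inf_le_left ((inf_le_right (a := a)).trans hvt)).trans hu
    exact reach_step hr (Or.inl (ppdown_of hac huv hvc hav))

/-- The key congruence built from reachability. -/
def sigma (hFL : FiniteLength L) (r : PrimeInt L) : LatCon L where
  r x y := C r (x ⊓ y) (x ⊔ y)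
  refl' x := by simpa using C.refl (r := r) x
  symm' := by
    intro x y h
    rwa [inf_comm, sup_comm] at h
  trans' := by
    intro x y z hxy hyz
    have h1 : C r (x ⊓ y ⊓ z) (x ⊓ y) := by
      have h := C_meet hFL hyz (x ⊓ y)
      rw [show (y ⊓ z) ⊓ (x ⊓ y) = x ⊓ y ⊓ z by
            simp [inf_assoc, inf_comm, inf_left_comm],
          inf_eq_right.2 ((inf_le_right (a := x)).trans le_sup_left)] at h
      exact h
    have h3 : C r (x ⊔ y) (x ⊔ y ⊔ z) := by
      have h := C_join hFL hyz (x ⊔ y)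
      rw [sup_eq_right.2 ((inf_le_left (b := z)).trans le_sup_right),
          show (y ⊔ z) ⊔ (x ⊔ y) = x ⊔ y ⊔ z by
            simp [sup_assoc, sup_comm, sup_left_comm]] at h
      exact h
    have h4 : C r (x ⊓ y ⊓ z) (x ⊔ y ⊔ z) := C_trans h1 (C_trans hxy h3)
    have h5 := C_meet hFL h4 (x ⊔ z)
    rw [show (x ⊓ y ⊓ z) ⊓ (x ⊔ z) = x ⊓ y ⊓ z from
          inf_eq_left.2 ((inf_le_left.trans inf_le_left).trans le_sup_left),
        show (x ⊔ y ⊔ z) ⊓ (x ⊔ z) = x ⊔ z from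
          inf_eq_right.2 (sup_le (le_sup_left.trans le_sup_left) le_sup_right)] at h5
    have h6 := C_join hFL h5 (x ⊓ z)
    rw [show (x ⊓ y ⊓ z) ⊔ (x ⊓ z) = x ⊓ z from
          sup_eq_right.2 (le_inf (inf_le_left.trans inf_le_left) inf_le_right),
        show (x ⊔ z) ⊔ (x ⊓ z) = x ⊔ z from sup_eq_left.2 inf_le_sup] at h6
    exact h6
  supCompat' := by
    intro a b c d hab hcd
    have h1 := C_join hFL hab (c ⊓ d)
    have h2 := C_join hFL hcd (a ⊔ b)
    rw [show (a ⊔ b) ⊔ (c ⊓ d) = (c ⊓ d) ⊔ (a ⊔ b) from sup_comm _ _] at h1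
    have h3 := C_trans h1 h2
    have h4 := C_join hFL h3 ((a ⊔ c) ⊓ (b ⊔ d))
    rw [show (a ⊓ b ⊔ c ⊓ d) ⊔ (a ⊔ c) ⊓ (b ⊔ d) = (a ⊔ c) ⊓ (b ⊔ d) from
          sup_eq_right.2 (sup_le
          (le_inf (inf_le_left.trans le_sup_left) (inf_le_right.trans le_sup_left))
          (le_inf (inf_le_left.trans le_sup_right) (inf_le_right.trans le_sup_right))),
        show (c ⊔ d) ⊔ (a ⊔ b) ⊔ (a ⊔ c) ⊓ (b ⊔ d) = (c ⊔ d) ⊔ (a ⊔ b) from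
          sup_eq_left.2 (inf_le_left.trans
          (sup_le (le_sup_left.trans le_sup_right) (le_sup_left.trans le_sup_left)))] at h4
    rw [show (a ⊔ c) ⊔ (b ⊔ d) = (c ⊔ d) ⊔ (a ⊔ b) by
          simp [sup_assoc, sup_comm, sup_left_comm]]
    exact h4
  infCompat' := by
    intro a b c d hab hcd
    have h1 := C_meet hFL hcd (a ⊓ b)
    have h2 := C_meet hFL hab (c ⊔ d)
    rw [show (c ⊔ d) ⊓ (a ⊓ b) = (a ⊓ b) ⊓ (c ⊔ d) from inf_comm _ _] at h1
    have h3 := C_trans h1 h2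
    have h4 := C_meet hFL h3 ((a ⊓ c) ⊔ (b ⊓ d))
    rw [show (c ⊓ d) ⊓ (a ⊓ b) ⊓ ((a ⊓ c) ⊔ b ⊓ d) = (c ⊓ d) ⊓ (a ⊓ b) from
          inf_eq_left.2 ((le_inf (inf_le_right.trans inf_le_left)
          (inf_le_left.trans inf_le_left)).trans le_sup_left),
        show (a ⊔ b) ⊓ (c ⊔ d) ⊓ ((a ⊓ c) ⊔ b ⊓ d) = (a ⊓ c) ⊔ b ⊓ d from
          inf_eq_right.2 (sup_le
          (le_inf (inf_le_left.trans le_sup_left) (inf_le_right.trans le_sup_left))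
          (le_inf (inf_le_left.trans le_sup_right) (inf_le_right.trans le_sup_right)))] at h4
    rw [show (a ⊓ c) ⊓ (b ⊓ d) = (c ⊓ d) ⊓ (a ⊓ b) by
          simp [inf_assoc, inf_comm, inf_left_comm]]
    exact h4

/-- A single prime-perspectivity step reverses the order of principal congruences. -/
lemma step_con {p q : PrimeInt L} (h : Step p q) : primeCon q ≤ primeCon p := by
  intro x y hxy θ hθ
  apply hxy θ
  rcases h with ⟨hy, hle⟩ | ⟨hx, hle⟩
  · -- PPDown
    have h1 := θ.infCompat' hθ (θ.refl' q.val.2)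
    rw [show p.val.2 ⊓ q.val.2 = q.val.2 from inf_eq_right.2 (hy ▸ le_sup_right)] at h1
    have h2 := θ.supCompat' h1 (θ.refl' q.val.1)
    rwa [show p.val.1 ⊓ q.val.2 ⊔ q.val.1 = q.val.1 from sup_eq_right.2 hle,
         show q.val.2 ⊔ q.val.1 = q.val.2 from sup_eq_left.2 q.prop.le] at h2
  · -- PPUp
    have h1 := θ.supCompat' hθ (θ.refl' q.val.1)
    rw [show p.val.1 ⊔ q.val.1 = q.val.1 from sup_eq_right.2 (hx ▸ inf_le_right)] at h1
    have h2 := θ.infCompat' h1 (θ.refl' q.val.2)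
    rwa [show q.val.1 ⊓ q.val.2 = q.val.1 from inf_eq_left.2 q.prop.le,
         show (p.val.2 ⊔ q.val.1) ⊓ q.val.2 = q.val.2 from inf_eq_right.2 hle] at h2

end PPL

/-- **Prime-Projectivity Lemma (Grätzer).** In a lattice `L` of finite length,
`con(r₁) ≥ con(r₂)` iff there is a sequence of prime intervals from `r₁` to `r₂`
whose consecutive members are related by prime-perspectivity down or up. -/
theorem primeProjectivity_lemma
    (L : Type) [Lattice L] (hFL : FiniteLength L) (r₁ r₂ : PrimeInt L) :
    primeCon r₂ ≤ primeCon r₁ ↔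
      ∃ (n : ℕ) (f : Fin (n + 1) → PrimeInt L),
        f 0 = r₁ ∧ f (Fin.last n) = r₂ ∧
        ∀ i : Fin n, PPDown (f i.castSucc) (f i.succ) ∨ PPUp (f i.castSucc) (f i.succ) := by
  constructor
  · intro hle
    obtain ⟨⟨x2, y2⟩, hcov2⟩ := r₂
    have h2 : (primeCon (⟨(x2, y2), hcov2⟩ : PrimeInt L)).r x2 y2 := fun θ h => h
    have h1 : (primeCon r₁).r x2 y2 := hle h2
    have hσ : (PPL.sigma hFL r₁).r r₁.val.1 r₁.val.2 := by
      show PPL.C r₁ (r₁.val.1 ⊓ r₁.val.2) (r₁.val.1 ⊔ r₁.val.2)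
      rw [inf_eq_left.2 r₁.prop.le, sup_eq_right.2 r₁.prop.le]
      have hcov : r₁.val.1 ⋖ r₁.val.2 := r₁.prop
      have hre : PPL.Reach r₁ (⟨(r₁.val.1, r₁.val.2), hcov⟩ : PrimeInt L) :=
        PPL.reach_refl r₁
      exact PPL.C.step hcov hre (PPL.C.refl _)
    have hC : PPL.C r₁ (x2 ⊓ y2) (x2 ⊔ y2) := h1 _ hσ
    rw [inf_eq_left.2 hcov2.le, sup_eq_right.2 hcov2.le] at hC
    exact PPL.reach_of_C hcov2 hC
  · rintro ⟨n, f, h0, hl, hs⟩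
    have key : ∀ i : Fin (n + 1), primeCon (f i) ≤ primeCon r₁ := by
      intro i
      induction i using Fin.induction with
      | zero => rw [h0]
      | succ j ih => exact le_trans (PPL.step_con (hs j)) ih
    have := key (Fin.last n)
    rwa [hl] at this
end

section
/- Let D be a finite distributive lattice such that J(D) is the union of two chains and the largest element 1 = 1_D is join-reducible, and let p, q ∈ J(D) be distinct elements with 1 = p ∨ q and p ≺ 1. Then: the filter ↑q = {d ∈ D : d ≥ q} is a chain; D is the disjoint union of the principal ideal ↓p = {d ∈ D : d ≤ p} and ↑q; and q is a maximal element of J(D). -/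
/-- If `a ≰ b`, there is a sup-irreducible element below `a` not below `b`. -/
lemma exists_supIrred_le_not_le {D : Type} [DistribLattice D] [Fintype D] [OrderBot D]
    {a b : D} (h : ¬ a ≤ b) : ∃ x : D, SupIrred x ∧ x ≤ a ∧ ¬ x ≤ b := by
  obtain ⟨s, hs, hirr⟩ := exists_supIrred_decomposition a
  by_contra hc
  push_neg at hc
  apply h
  rw [← hs]
  exact Finset.sup_le fun i hi => hc i (hirr hi) (hs ▸ Finset.le_sup (f := id) hi)

/-- Let `D` be a finite distributive lattice that is planar (i.e., `J(D)` is the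
union of two chains) and whose top element is join-reducible, and let
`p ≠ q ∈ J(D)` with `1 = p ⊔ q` and `p ≺ 1`. Then the filter `↑q` is a chain,
`D` is the disjoint union of the ideal `↓p` and the filter `↑q`, and `q` is a
maximal element of `J(D)`. -/
theorem filter_chain_disjoint_union_and_maximal
    (D : Type) [DistribLattice D] [Fintype D] [BoundedOrder D]
    (hplanar : ∃ C₁ C₂ : Set D,
      IsChain (· ≤ ·) C₁ ∧ IsChain (· ≤ ·) C₂ ∧ JSet D = C₁ ∪ C₂)
    (htop : ¬ SupIrred (⊤ : D))
    (p q : D) (hp : SupIrred p) (hq : SupIrred q) (hpq : p ≠ q)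
    (hjoin : p ⊔ q = ⊤) (hcov : p ⋖ ⊤) :
    IsChain (· ≤ ·) {d : D | q ≤ d} ∧
    {d : D | d ≤ p} ∪ {d : D | q ≤ d} = Set.univ ∧
    {d : D | d ≤ p} ∩ {d : D | q ≤ d} = ∅ ∧
    ∀ x : D, SupIrred x → q ≤ x → x = q := by
  -- `q ≰ p`, otherwise `p = ⊤` and `⊤` would be sup-irreducible.
  have hqp : ¬ q ≤ p := by
    intro h
    apply htop
    have : p = ⊤ := by rw [← hjoin, sup_eq_left.2 h]
    rwa [← this]
  -- every element not below `p` is above `q`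
  have key : ∀ d : D, ¬ d ≤ p → q ≤ d := by
    intro d hd
    have hpd : p ⊔ d = ⊤ := by
      by_contra h
      exact hcov.2 (left_lt_sup.2 hd) (lt_top_iff_ne_top.2 h)
    have : q ≤ p ⊔ d := hpd ▸ le_top
    exact (hq.supPrime.le_sup.1 this).resolve_left hqp
  -- maximality of `q`
  have hmax : ∀ x : D, SupIrred x → q ≤ x → x = q := by
    intro x hx hqx
    have : x ≤ p ⊔ q := hjoin ▸ le_top
    rcases hx.supPrime.le_sup.1 this with h | h
    · exact absurd (hqx.trans h) hqp
    · exact le_antisymm h hqx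
  refine ⟨?_, ?_, ?_, hmax⟩
  · -- the filter `↑q` is a chain
    intro a ha b hb hab
    by_contra hc
    push_neg at hc
    obtain ⟨hnab, hnba⟩ := hc
    obtain ⟨x, hx, hxa, hxb⟩ := exists_supIrred_le_not_le hnab
    obtain ⟨y, hy, hyb, hya⟩ := exists_supIrred_le_not_le hnba
    -- `x ≤ p` and `y ≤ p`
    have hxp : x ≤ p := by
      by_contra h
      exact hxb ((hmax x hx (key x h)) ▸ hb)
    have hyp : y ≤ p := by
      by_contra h
      exact hya ((hmax y hy (key y h)) ▸ ha)
    have hxy : ¬ x ≤ y := fun h => hxb (h.trans hyb)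
    have hyx : ¬ y ≤ x := fun h => hya (h.trans hxa)
    have hxq : x ≠ q := fun h => hqp (h ▸ hxp)
    have hyq : y ≠ q := fun h => hqp (h ▸ hyp)
    obtain ⟨C₁, C₂, hC₁, hC₂, hJ⟩ := hplanar
    have hxJ : x ∈ C₁ ∪ C₂ := hJ ▸ hx
    have hyJ : y ∈ C₁ ∪ C₂ := hJ ▸ hy
    have hqJ : q ∈ C₁ ∪ C₂ := hJ ▸ hq
    have hxyne : x ≠ y := fun h => hxy (h ▸ le_refl x)
    -- a helper: q comparable to z (z ∈ {x,y}) is impossible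
    have hqx : ∀ z : D, SupIrred z → z ≤ p → (z ≤ q ∨ q ≤ z) →
        (∀ c : D, q ≤ c → z ≤ c) := by
      intro z hz hzp hcomp c hqc
      rcases hcomp with h | h
      · exact h.trans hqc
      · exact absurd ((hmax z hz h) ▸ hzp) hqp
    rcases hxJ with hx1 | hx2
    · rcases hyJ with hy1 | hy2
      · rcases hC₁ hx1 hy1 hxyne with h | h
        · exact hxy h
        · exact hyx h
      · rcases hqJ with hq1 | hq2
        · exact hxb (hqx x hx hxp (hC₁ hx1 hq1 hxq) b hb)
        · exact hya (hqx y hy hyp (hC₂ hy2 hq2 hyq) a ha)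
    · rcases hyJ with hy1 | hy2
      · rcases hqJ with hq1 | hq2
        · exact hya (hqx y hy hyp (hC₁ hy1 hq1 hyq) a ha)
        · exact hxb (hqx x hx hxp (hC₂ hx2 hq2 hxq) b hb)
      · rcases hC₂ hx2 hy2 hxyne with h | h
        · exact hxy h
        · exact hyx h
  · -- union is everything
    ext d
    simp only [Set.mem_union, Set.mem_setOf_eq, Set.mem_univ, iff_true]
    exact or_iff_not_imp_left.2 (key d)
  · -- intersection is empty
    ext d
    simp only [Set.mem_inter_iff, Set.mem_setOf_eq, Set.mem_empty_iff_false, iff_false, not_and]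
    exact fun hdp hqd => hqp (hqd.trans hdp)
end

section
/- Let L be a finite bounded lattice (with bounds 0 and 1, 0 ≠ 1) and let S be a sublattice of L with 0, 1 ∈ S and |S| ≥ 3 such that S is a simple lattice (its only congruences are the equality relation and the full relation). Then: (1) for every x ∈ S∖{0,1}, con_L(0,x) = con_L(x,1) and this congruence is the largest congruence of L; (2) for every x ∈ L∖{0,1}, if x has a complement y ∈ S∖{0,1} (that is, x ∧ y = 0 and x ∨ y = 1), then con_L(0,x) = con_L(x,1) is the largest congruence of L. Consequently, if every element of L∖S has a complement in S∖{0,1}, then L is {0,1}-separating. -/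
/-- `L` is a `{0,1}`-separating lattice: for every `x ∉ {0,1}`,
`con(0,x) = con(x,1)` is the largest congruence of `L`. -/
def Separating (L : Type) [Lattice L] [BoundedOrder L] : Prop :=
  ∀ x : L, x ≠ ⊥ → x ≠ ⊤ →
    latConGen ⊥ x = latConGen x ⊤ ∧ ∀ a b : L, (latConGen ⊥ x).r a b


/-- Restriction of a lattice congruence to a sublattice. -/
def restrictCon {L : Type} [Lattice L] (S : Sublattice L) (θ : LatCon L) :
    LatCon ↥S where
  r a b := θ.r a b
  refl' a := θ.refl' a
  symm' h := θ.symm' h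
  trans' h h' := θ.trans' h h'
  supCompat' {a b c d} h h' := by simpa using θ.supCompat' h h'
  infCompat' {a b c d} h h' := by simpa using θ.infCompat' h h'

/-- Let `L` be a finite bounded lattice and `S` a simple `{0,1}`-sublattice of `L`
with at least three elements. Then (1) every `x ∈ S ∖ {0,1}` satisfies
`con(0,x) = con(x,1) = 1_{Con L}`; (2) so does every `x ∈ L ∖ {0,1}` having a
complement in `S ∖ {0,1}`; consequently, (3) if every element of `L ∖ S` has a
complement in `S ∖ {0,1}`, then `L` is `{0,1}`-separating. -/
theorem separating_of_simple_spanning_sublattice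
    (L : Type) [Lattice L] [BoundedOrder L] [Fintype L]
    (hbot_ne_top : (⊥ : L) ≠ ⊤)
    (S : Sublattice L) (hbot : (⊥ : L) ∈ S) (htop : (⊤ : L) ∈ S)
    (hcard : 3 ≤ (S : Set L).ncard)
    (hsimple : ∀ θ : LatCon ↥S,
      (∀ a b : ↥S, θ.r a b → a = b) ∨ (∀ a b : ↥S, θ.r a b)) :
    (∀ x : L, x ∈ S → x ≠ ⊥ → x ≠ ⊤ →
      latConGen ⊥ x = latConGen x ⊤ ∧ ∀ a b : L, (latConGen ⊥ x).r a b) ∧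
    (∀ x : L, x ≠ ⊥ → x ≠ ⊤ →
      ∀ y : L, y ∈ S → y ≠ ⊥ → y ≠ ⊤ → x ⊓ y = ⊥ → x ⊔ y = ⊤ →
        latConGen ⊥ x = latConGen x ⊤ ∧ ∀ a b : L, (latConGen ⊥ x).r a b) ∧
    ((∀ x : L, x ∉ S → ∃ y : L, y ∈ S ∧ y ≠ ⊥ ∧ y ≠ ⊤ ∧ x ⊓ y = ⊥ ∧ x ⊔ y = ⊤) →
      Separating L) := by
  have key : ∀ θ : LatCon L, ∀ u v : L, u ∈ S → v ∈ S → u ≠ v → θ.r u v →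
      ∀ a b : L, θ.r a b := by
    intro θ u v hu hv hne huv a b
    rcases hsimple (restrictCon S θ) with heq | hfull
    · exact absurd (congrArg Subtype.val (heq ⟨u, hu⟩ ⟨v, hv⟩ huv)) hne
    · have hbt : θ.r (⊥ : L) ⊤ := hfull ⟨⊥, hbot⟩ ⟨⊤, htop⟩
      have ha : θ.r a ⊤ := by simpa using θ.supCompat' (θ.refl' a) hbt
      have hb : θ.r b ⊤ := by simpa using θ.supCompat' (θ.refl' b) hbt
      exact θ.trans' ha (θ.symm' hb)
  have eqfull : ∀ θ ψ : LatCon L, (∀ a b : L, θ.r a b) → (∀ a b : L, ψ.r a b) →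
      θ = ψ := fun θ ψ h h' => LatCon.ext' (by
    funext a b; exact propext ⟨fun _ => h' a b, fun _ => h a b⟩)
  have part1 : ∀ x : L, x ∈ S → x ≠ ⊥ → x ≠ ⊤ →
      latConGen ⊥ x = latConGen x ⊤ ∧ ∀ a b : L, (latConGen ⊥ x).r a b := by
    intro x hx hxb hxt
    have h1 : ∀ a b : L, (latConGen ⊥ x).r a b :=
      key _ ⊥ x hbot hx (Ne.symm hxb) (fun θ h => h)
    have h2 : ∀ a b : L, (latConGen x ⊤).r a b :=
      key _ x ⊤ hx htop hxt (fun θ h => h)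
    exact ⟨eqfull _ _ h1 h2, h1⟩
  have part2 : ∀ x : L, x ≠ ⊥ → x ≠ ⊤ →
      ∀ y : L, y ∈ S → y ≠ ⊥ → y ≠ ⊤ → x ⊓ y = ⊥ → x ⊔ y = ⊤ →
        latConGen ⊥ x = latConGen x ⊤ ∧ ∀ a b : L, (latConGen ⊥ x).r a b := by
    intro x hxb hxt y hy hyb hyt hinf hsup
    have hx0 : (latConGen ⊥ x).r ⊥ x := fun θ h => h
    have h1r : (latConGen ⊥ x).r y ⊤ := by
      have := (latConGen ⊥ x).supCompat' ((latConGen ⊥ x).refl' y) hx0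
      simpa [sup_comm y x, hsup] using this
    have h1 : ∀ a b : L, (latConGen ⊥ x).r a b := key _ y ⊤ hy htop hyt h1r
    have hx1 : (latConGen x ⊤).r x ⊤ := fun θ h => h
    have h2r : (latConGen x ⊤).r ⊥ y := by
      have := (latConGen x ⊤).infCompat' hx1 ((latConGen x ⊤).refl' y)
      simpa [hinf] using this
    have h2 : ∀ a b : L, (latConGen x ⊤).r a b :=
      key _ ⊥ y hbot hy (Ne.symm hyb) h2r
    exact ⟨eqfull _ _ h1 h2, h1⟩
  refine ⟨part1, part2, ?_⟩
  intro hcomp x hxb hxt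
  by_cases hx : x ∈ S
  · exact part1 x hx hxb hxt
  · obtain ⟨y, hy, hyb, hyt, hinf, hsup⟩ := hcomp x hx
    exact part2 x hxb hxt y hy hyb hyt hinf hsup
end
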